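/- arXiv:1108.0535 — 3 statements merged into one kernel-verified Lean document; each statement's English description precedes it below -/
import Mathlib

section
/- For the coupled LDGM ensemble with design rate r = mL / (n(L - w + 1) + 2n·∑_{i=1}^{w-1}(1 - R(i/w))), the rate loss m/n − r is O(w/L) as L → ∞ with m, n, w fixed; precisely, m/n − r ≤ (m/n)·(2w)/(L) for all sufficiently large L. -/
/-! With `S = ∑_{i=1}^{w-1} (1 - R(i/w)) ∈ [0, w - 1]` the rate is `r = (m/n) · L / X` with
`X = L - w + 1 + 2S`, so the loss is `(m/n) · (X - L) / X`. Here `X - L ≤ w - 1 < w`, and once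
`L ≥ 2w` also `X ≥ L - w + 1 > L / 2`, which gives the bound `(m/n) · 2w / L`. -/

open Finset

lemma sum_one_sub_mem_Icc {ι : Type*} (s : Finset ι) (f : ι → ℝ)
    (hf : ∀ i ∈ s, f i ∈ Set.Icc (0 : ℝ) 1) :
    ∑ i ∈ s, (1 - f i) ∈ Set.Icc (0 : ℝ) #s := by
  constructor
  · exact sum_nonneg fun i hi => sub_nonneg.mpr (hf i hi).2
  · calc ∑ i ∈ s, (1 - f i) ≤ ∑ _i ∈ s, (1 : ℝ) :=
          sum_le_sum fun i hi => sub_le_self 1 (hf i hi).1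
      _ = #s := by simp

lemma natCast_div_mem_Icc_of_le {i w : ℕ} (hi : i ≤ w) : (i : ℝ) / w ∈ Set.Icc (0 : ℝ) 1 :=
  ⟨by positivity, div_le_one_of_le₀ (by exact_mod_cast hi) w.cast_nonneg⟩

lemma one_sub_div_le_of_le {w L S : ℝ} (hS₀ : 0 ≤ S) (hS : S ≤ w - 1) (hL : 2 * w ≤ L) :
    1 - L / (L - w + 1 + 2 * S) ≤ 2 * w / L := by
  have hX : 0 < L - w + 1 + 2 * S := by linarith
  have hLpos : 0 < L := by linarith
  rw [one_sub_div hX.ne', div_le_div_iff₀ hX hLpos]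
  calc (L - w + 1 + 2 * S - L) * L ≤ w * L := by gcongr; linarith
    _ ≤ 2 * w * (L - w + 1 + 2 * S) := by nlinarith

theorem coupled_rate_loss_bigO_general (m n w : ℕ) (hw : 1 ≤ w)
    (R : ℝ → ℝ) (hR : ∀ x ∈ Set.Icc (0:ℝ) 1, R x ∈ Set.Icc (0:ℝ) 1) :
    ∃ L₀ : ℕ, ∀ L : ℕ, L₀ ≤ L →
      (m : ℝ) / (n : ℝ) -
        (m * L : ℝ) /
          ((n : ℝ) * ((L : ℝ) - (w : ℝ) + 1) +
            2 * (n : ℝ) * ∑ i ∈ Finset.Icc 1 (w - 1), (1 - R ((i : ℝ) / (w : ℝ))))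
      ≤ ((m : ℝ) / (n : ℝ)) * (2 * (w : ℝ)) / (L : ℝ) := by
  set S := ∑ i ∈ Icc 1 (w - 1), (1 - R ((i : ℝ) / w))
  obtain ⟨hS₀, hS⟩ : S ∈ Set.Icc (0 : ℝ) (w - 1) := by
    have h := sum_one_sub_mem_Icc (Icc 1 (w - 1)) (fun i : ℕ => R ((i : ℝ) / w))
      fun i hi => hR _ (natCast_div_mem_Icc_of_le (by grind))
    rwa [Nat.card_Icc, Nat.add_sub_cancel, Nat.cast_sub hw, Nat.cast_one] at h
  refine ⟨2 * w, fun L hL => ?_⟩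
  have hL' : 2 * (w : ℝ) ≤ L := by exact_mod_cast hL
  -- `mul_div_mul_comm` holds without `n ≠ 0`, since both sides vanish when `n = 0`
  calc (m : ℝ) / n - m * L / (n * (L - w + 1) + 2 * n * S)
        = m / n * (1 - L / (L - w + 1 + 2 * S)) := by
          rw [show (n : ℝ) * (L - w + 1) + 2 * n * S = n * (L - w + 1 + 2 * S) by ring,
            mul_div_mul_comm]
          ring
    _ ≤ m / n * (2 * w / L) := by gcongr; exact one_sub_div_le_of_le hS₀ hS hL'
    _ = m / n * (2 * w) / L := (mul_div_assoc _ _ _).symm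

/-- The rate loss `m/n − r(L)` of the coupled LDGM ensemble is `O(w/L)`:
for all sufficiently large `L`, `m/n − r(L) ≤ (m/n)·(2w)/L`. -/
theorem coupled_rate_loss_bigO (m n w : ℕ) (hm : 0 < m) (hn : 0 < n) (hw : 1 ≤ w)
    (R : ℝ → ℝ) (hR : ∀ x ∈ Set.Icc (0:ℝ) 1, R x ∈ Set.Icc (0:ℝ) 1) :
    ∃ L₀ : ℕ, ∀ L : ℕ, L₀ ≤ L →
      (m : ℝ) / (n : ℝ) -
        (m * L : ℝ) /
          ((n : ℝ) * ((L : ℝ) - (w : ℝ) + 1) +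
            2 * (n : ℝ) * ∑ i ∈ Finset.Icc 1 (w - 1), (1 - R ((i : ℝ) / (w : ℝ))))
      ≤ ((m : ℝ) / (n : ℝ)) * (2 * (w : ℝ)) / (L : ℝ) :=
  coupled_rate_loss_bigO_general m n w hw R hR
end

section
/- The strict inequality R₂ ≤ 1/(4·ln 2) is necessary for universality, derived from: for every δ > 0 there exists p ∈ (0,1/2) (a BSC crossover probability) such that C(p)/(2·D(p)) < 1/(4·ln 2) + δ, where C(p) = 1 − h₂(p) and D(p) = (1−2p)². Hence if R₂ > 1/(4 ln 2), there is a BSC for which R₂ > C/(2D). -/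
noncomputable def binaryEntropy (p : ℝ) : ℝ :=
  -p * Real.logb 2 p - (1 - p) * Real.logb 2 (1 - p)

/-!
Writing `x = 1 - 2p`, one has `(1 - h₂ p) · ln 2 = KL(p ‖ 1/2) = x²/2 + O(x⁴)`, so the ratio
tends to `1/(4 ln 2)` as `p → 1/2`. An explicit upper bound suffices: splitting the divergence as
`½ ln(4p(1-p)) + ½ x ln((1-p)/p)` and applying `ln y ≤ y - 1` to both logarithms gives
`(1 - h₂ p) / (2x²) ≤ (1-p) / (4 p ln 2)`, whose right side is continuous at `p = 1/2`.
-/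

open Real Filter Topology

lemma klDiv_half_le {p : ℝ} (hp₀ : 0 < p) (hp : p ≤ 1 / 2) :
    p * log (2 * p) + (1 - p) * log (2 * (1 - p)) ≤ (1 - 2 * p) ^ 2 * (1 - p) / (2 * p) := by
  have hq₀ : 0 < 1 - p := by linarith
  have hsum : log (2 * p) + log (2 * (1 - p)) ≤ -(1 - 2 * p) ^ 2 := by
    rw [← log_mul (by positivity) (by positivity)]
    linarith [log_le_sub_one_of_pos (show 0 < 2 * p * (2 * (1 - p)) by positivity)]
  have hdiff : log (2 * (1 - p)) - log (2 * p) ≤ (1 - 2 * p) / p := by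
    rw [← log_div (by positivity) (by positivity)]
    calc log (2 * (1 - p) / (2 * p)) ≤ 2 * (1 - p) / (2 * p) - 1 :=
          log_le_sub_one_of_pos (by positivity)
      _ = (1 - 2 * p) / p := by field_simp; ring
  have hx : 0 ≤ 1 - 2 * p := by linarith
  calc p * log (2 * p) + (1 - p) * log (2 * (1 - p))
      = (log (2 * p) + log (2 * (1 - p))) / 2
          + (1 - 2 * p) / 2 * (log (2 * (1 - p)) - log (2 * p)) := by ring
    _ ≤ -(1 - 2 * p) ^ 2 / 2 + (1 - 2 * p) / 2 * ((1 - 2 * p) / p) := by gcongr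
    _ = (1 - 2 * p) ^ 2 * (1 - p) / (2 * p) := by field_simp; ring

lemma one_sub_binaryEntropy_eq {p : ℝ} (hp₀ : 0 < p) (hp₁ : p < 1) :
    1 - binaryEntropy p = (p * log (2 * p) + (1 - p) * log (2 * (1 - p))) / log 2 := by
  have hq₀ : 0 < 1 - p := by linarith
  have hlog2 : log 2 ≠ 0 := (log_pos one_lt_two).ne'
  rw [binaryEntropy, logb, logb, log_mul two_ne_zero hp₀.ne', log_mul two_ne_zero hq₀.ne']
  field_simp
  ring

lemma bsc_ratio_le {p : ℝ} (hp₀ : 0 < p) (hp : p < 1 / 2) :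
    (1 - binaryEntropy p) / (2 * (1 - 2 * p) ^ 2) ≤ (1 - p) / (4 * log 2 * p) := by
  have hlog2 : 0 < log 2 := log_pos one_lt_two
  have hx : 0 < (1 - 2 * p) ^ 2 := by nlinarith
  rw [one_sub_binaryEntropy_eq hp₀ (by linarith), div_le_iff₀ (by positivity),
    div_le_iff₀ hlog2]
  calc p * log (2 * p) + (1 - p) * log (2 * (1 - p))
      ≤ (1 - 2 * p) ^ 2 * (1 - p) / (2 * p) := klDiv_half_le hp₀ hp.le
    _ = (1 - p) / (4 * log 2 * p) * (2 * (1 - 2 * p) ^ 2) * log 2 := by field_simp; ring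

lemma exists_bsc_ratio_lt {c : ℝ} (hc : 1 / (4 * log 2) < c) :
    ∃ p ∈ Set.Ioo (0 : ℝ) (1 / 2), (1 - binaryEntropy p) / (2 * (1 - 2 * p) ^ 2) < c := by
  have hlog2 : 0 < log 2 := log_pos one_lt_two
  have hbound : Tendsto (fun p : ℝ => (1 - p) / (4 * log 2 * p)) (𝓝[<] (1 / 2))
      (𝓝 (1 / (4 * log 2))) := by
    have hcont : ContinuousAt (fun p : ℝ => (1 - p) / (4 * log 2 * p)) (1 / 2) :=
      ContinuousAt.div (by fun_prop) (by fun_prop) (by positivity)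
    convert hcont.tendsto.mono_left nhdsWithin_le_nhds using 2
    field_simp
    norm_num
  obtain ⟨p, hlt, hp⟩ :=
    ((hbound.eventually (gt_mem_nhds hc)).and
      (Ioo_mem_nhdsLT (by norm_num : (0 : ℝ) < 1 / 2))).exists
  exact ⟨p, hp, (bsc_ratio_le hp.1 hp.2).trans_lt hlt⟩

/-- Necessity of `R₂ ≤ 1/(4 ln 2)` for universality: for every `δ > 0` there is
a BSC crossover probability `p ∈ (0,1/2)` with `C(p)/(2D(p)) < 1/(4 ln 2) + δ`
(where `C(p) = 1 − h₂(p)`, `D(p) = (1−2p)²`); hence any `R₂ > 1/(4 ln 2)`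
violates `R₂ ≤ C/(2D)` for some BSC. -/
theorem bsc_ratio_inf (δ : ℝ) (hδ : 0 < δ) :
    (∃ p ∈ Set.Ioo (0:ℝ) (1 / 2),
      (1 - binaryEntropy p) / (2 * (1 - 2 * p) ^ 2) < 1 / (4 * Real.log 2) + δ) ∧
    (∀ R₂ : ℝ, 1 / (4 * Real.log 2) < R₂ →
      ∃ p ∈ Set.Ioo (0:ℝ) (1 / 2),
        (1 - binaryEntropy p) / (2 * (1 - 2 * p) ^ 2) < R₂) :=
  ⟨exists_bsc_ratio_lt (lt_add_of_pos_right _ hδ), fun _ => exists_bsc_ratio_lt⟩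
end

section
/- Fixed points of the coupled system dominate the boundary condition: for the coupled DE fixed point equations x_i = λ((1/w)∑_{j=i}^{i+w−1} y_j), y_j = 1 − (1−ε)ρ(1 − (1/w)∑_{i=j−w+1}^{j} x_i) with x_i = 0 for i ∉ [0,L−1], any fixed point (x_i) satisfies x_i ≤ x̄ for all i ∈ [0,L−1], where x̄ is the largest fixed point of the uncoupled equation x̄ = λ(1 − (1−ε)ρ(1−x̄)). -/
/-!
Let `g = λ ∘ c` with `c s = 1 - (1-ε) ρ(1-s)`. Both `λ` and `c` are monotone self-maps of
`[0,1]`, and window averages of values in `[0,a]` stay in `[0,a]`. So if a coupled fixed point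
satisfies `x ≤ a` everywhere, then the fixed-point equation gives `x ≤ g a` everywhere (the
padding zeros satisfy this trivially). Starting from `a = 1` and iterating, `x ≤ gⁿ(1)` for all
`n`, hence `x ≤ x̄ = ⨅ n, gⁿ(1)`.
-/

open Set

lemma one_div_card_mul_sum_mem_Icc {ι : Type*} {s : Finset ι} {f : ι → ℝ} {c : ℝ}
    (hc : 0 ≤ c) (hf : ∀ i ∈ s, f i ∈ Icc 0 c) :
    1 / (s.card : ℝ) * ∑ i ∈ s, f i ∈ Icc 0 c := by
  have hsum_nonneg : 0 ≤ ∑ i ∈ s, f i := Finset.sum_nonneg fun i hi => (hf i hi).1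
  refine ⟨by positivity, ?_⟩
  rcases s.eq_empty_or_nonempty with rfl | hs
  · simpa using hc
  have hsum_le : ∑ i ∈ s, f i ≤ s.card * c := by
    simpa using Finset.sum_le_card_nsmul s f c fun i hi => (hf i hi).2
  have hcard : (0 : ℝ) < s.card := by exact_mod_cast hs.card_pos
  rw [one_div_mul_eq_div, div_le_iff₀ hcard]
  linarith

lemma Int.card_Icc_add_sub_one (a : ℤ) (w : ℕ) : (Finset.Icc a (a + w - 1)).card = w := by
  rw [Int.card_Icc]; omega

lemma Int.card_Icc_sub_add_one (a : ℤ) (w : ℕ) : (Finset.Icc (a - w + 1) a).card = w := by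
  rw [Int.card_Icc]; omega

def checkNodeMap (ε : ℝ) (rho : ℝ → ℝ) (s : ℝ) : ℝ := 1 - (1 - ε) * rho (1 - s)

section CheckNodeMap

variable {ε : ℝ} {rho : ℝ → ℝ}

lemma checkNodeMap_mem_Icc (hε : ε ∈ Icc (0 : ℝ) 1)
    (hrho_maps : ∀ x ∈ Icc (0 : ℝ) 1, rho x ∈ Icc (0 : ℝ) 1) {s : ℝ} (hs : s ∈ Icc (0 : ℝ) 1) :
    checkNodeMap ε rho s ∈ Icc (0 : ℝ) 1 := by
  obtain ⟨hr0, hr1⟩ := hrho_maps _ (Icc.one_sub_mem hs)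
  obtain ⟨hε0, hε1⟩ := hε
  constructor <;> unfold checkNodeMap <;> nlinarith

lemma checkNodeMap_monotoneOn (hε1 : ε ≤ 1) (hrho_mono : MonotoneOn rho (Icc (0 : ℝ) 1)) :
    MonotoneOn (checkNodeMap ε rho) (Icc (0 : ℝ) 1) := by
  intro s hs t ht hst
  have hrho : rho (1 - t) ≤ rho (1 - s) :=
    hrho_mono (Icc.one_sub_mem ht) (Icc.one_sub_mem hs) (by linarith)
  unfold checkNodeMap
  nlinarith

end CheckNodeMap

lemma coupled_le_of_forall_le {ε : ℝ} (hε : ε ∈ Icc (0 : ℝ) 1) {w : ℕ} {lam rho : ℝ → ℝ}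
    (hlam_mono : MonotoneOn lam (Icc (0 : ℝ) 1)) (hrho_mono : MonotoneOn rho (Icc (0 : ℝ) 1))
    (hrho_maps : ∀ x ∈ Icc (0 : ℝ) 1, rho x ∈ Icc (0 : ℝ) 1)
    {x : ℤ → ℝ} {a : ℝ} (ha : a ∈ Icc (0 : ℝ) 1) (hxa : ∀ k, x k ∈ Icc 0 a) {i : ℤ}
    (hfp : x i = lam ((1 / (w : ℝ)) * ∑ j ∈ Finset.Icc i (i + (w : ℤ) - 1),
      checkNodeMap ε rho ((1 / (w : ℝ)) * ∑ k ∈ Finset.Icc (j - (w : ℤ) + 1) j, x k))) :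
    x i ≤ lam (checkNodeMap ε rho a) := by
  have hca : checkNodeMap ε rho a ∈ Icc (0 : ℝ) 1 := checkNodeMap_mem_Icc hε hrho_maps ha
  have hinner : ∀ j : ℤ, checkNodeMap ε rho ((1 / (w : ℝ)) *
      ∑ k ∈ Finset.Icc (j - (w : ℤ) + 1) j, x k) ∈ Icc 0 (checkNodeMap ε rho a) := by
    intro j
    have havg :=
      one_div_card_mul_sum_mem_Icc (s := Finset.Icc (j - w + 1) j) ha.1 fun k _ => hxa k
    rw [Int.card_Icc_sub_add_one] at havg
    have havg01 : _ ∈ Icc (0 : ℝ) 1 := ⟨havg.1, havg.2.trans ha.2⟩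
    exact ⟨(checkNodeMap_mem_Icc hε hrho_maps havg01).1,
      checkNodeMap_monotoneOn hε.2 hrho_mono havg01 ha havg.2⟩
  have houter :=
    one_div_card_mul_sum_mem_Icc (s := Finset.Icc i (i + w - 1)) hca.1 fun j _ => hinner j
  rw [Int.card_Icc_add_sub_one] at houter
  rw [hfp]
  exact hlam_mono ⟨houter.1, houter.2.trans hca.2⟩ hca houter.2

theorem coupled_FP_dominated_general (ε : ℝ) (hε : ε ∈ Set.Icc (0:ℝ) 1)
    (L w : ℕ)
    (lam rho : ℝ → ℝ)
    (hlam_mono : MonotoneOn lam (Set.Icc (0:ℝ) 1))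
    (hrho_mono : MonotoneOn rho (Set.Icc (0:ℝ) 1))
    (hlam_maps : ∀ x ∈ Set.Icc (0:ℝ) 1, lam x ∈ Set.Icc (0:ℝ) 1)
    (hrho_maps : ∀ x ∈ Set.Icc (0:ℝ) 1, rho x ∈ Set.Icc (0:ℝ) 1)
    (x : ℤ → ℝ)
    (hx : ∀ i : ℤ, 0 ≤ i → i ≤ (L : ℤ) - 1 → x i ∈ Set.Icc (0:ℝ) 1)
    (hx0 : ∀ i : ℤ, i < 0 ∨ (L : ℤ) ≤ i → x i = 0)
    (hfp : ∀ i : ℤ, 0 ≤ i → i ≤ (L : ℤ) - 1 →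
      x i = lam ((1 / (w : ℝ)) * ∑ j ∈ Finset.Icc i (i + (w : ℤ) - 1),
        (1 - (1 - ε) * rho (1 - (1 / (w : ℝ)) * ∑ k ∈ Finset.Icc (j - (w : ℤ) + 1) j, x k))))
    (xbar : ℝ)
    (hxbar : xbar = ⨅ n : ℕ, (fun t => lam (1 - (1 - ε) * rho (1 - t)))^[n] 1) :
    ∀ i : ℤ, 0 ≤ i → i ≤ (L : ℤ) - 1 → x i ≤ xbar := by
  have hx_mem : ∀ k, x k ∈ Icc (0 : ℝ) 1 := fun k => by
    by_cases hk : 0 ≤ k ∧ k ≤ (L : ℤ) - 1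
    · exact hx k hk.1 hk.2
    · rw [hx0 k (by omega)]; exact ⟨le_rfl, zero_le_one⟩
  let Dominates (a : ℝ) : Prop := a ∈ Icc (0 : ℝ) 1 ∧ ∀ k, x k ≤ a
  have hstep : ∀ a, Dominates a → Dominates (lam (checkNodeMap ε rho a)) := by
    rintro a ⟨ha, hxa⟩
    have hga := hlam_maps _ (checkNodeMap_mem_Icc hε hrho_maps ha)
    refine ⟨hga, fun k => ?_⟩
    by_cases hk : 0 ≤ k ∧ k ≤ (L : ℤ) - 1
    · exact coupled_le_of_forall_le hε hlam_mono hrho_mono hrho_maps ha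
        (fun k => ⟨(hx_mem k).1, hxa k⟩) (hfp k hk.1 hk.2)
    · rw [hx0 k (by omega)]; exact hga.1
  have hiter (n : ℕ) : Dominates ((fun t => lam (checkNodeMap ε rho t))^[n] 1) :=
    Function.Iterate.rec Dominates ⟨⟨zero_le_one, le_rfl⟩, fun k => (hx_mem k).2⟩ hstep n
  intro i _ _
  rw [hxbar]
  exact le_ciInf fun n => (hiter n).2 i

/-- Any fixed point of the coupled DE equations is dominated componentwise by
the largest fixed point `x̄` of the uncoupled equation
`x̄ = λ(1 − (1−ε)ρ(1−x̄))`, obtained as the limit of the decreasing iterates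
`gⁿ(1)` of the uncoupled map `g`. -/
theorem coupled_FP_dominated (ε : ℝ) (hε : ε ∈ Set.Icc (0:ℝ) 1)
    (L w : ℕ) (hL : 1 ≤ L) (hw : 1 ≤ w)
    (lam rho : ℝ → ℝ)
    (hlam_mono : MonotoneOn lam (Set.Icc (0:ℝ) 1))
    (hrho_mono : MonotoneOn rho (Set.Icc (0:ℝ) 1))
    (hlam_maps : ∀ x ∈ Set.Icc (0:ℝ) 1, lam x ∈ Set.Icc (0:ℝ) 1)
    (hrho_maps : ∀ x ∈ Set.Icc (0:ℝ) 1, rho x ∈ Set.Icc (0:ℝ) 1)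
    (hlam_cont : ContinuousOn lam (Set.Icc (0:ℝ) 1))
    (hrho_cont : ContinuousOn rho (Set.Icc (0:ℝ) 1))
    (x : ℤ → ℝ)
    (hx : ∀ i : ℤ, 0 ≤ i → i ≤ (L : ℤ) - 1 → x i ∈ Set.Icc (0:ℝ) 1)
    (hx0 : ∀ i : ℤ, i < 0 ∨ (L : ℤ) ≤ i → x i = 0)
    (hfp : ∀ i : ℤ, 0 ≤ i → i ≤ (L : ℤ) - 1 →
      x i = lam ((1 / (w : ℝ)) * ∑ j ∈ Finset.Icc i (i + (w : ℤ) - 1),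
        (1 - (1 - ε) * rho (1 - (1 / (w : ℝ)) * ∑ k ∈ Finset.Icc (j - (w : ℤ) + 1) j, x k))))
    (xbar : ℝ)
    (hxbar : xbar = ⨅ n : ℕ, (fun t => lam (1 - (1 - ε) * rho (1 - t)))^[n] 1) :
    ∀ i : ℤ, 0 ≤ i → i ≤ (L : ℤ) - 1 → x i ≤ xbar :=
  coupled_FP_dominated_general ε hε L w lam rho hlam_mono hrho_mono hlam_maps hrho_maps x hx hx0 hfp
    xbar hxbar
end
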